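/- arXiv:2412.19214 — 5 statements merged into one kernel-verified Lean document; each statement's English description precedes it below -/
import Mathlib

section
/- With P_{ab} the superpermutation operators and J_a the odd involutions on (ℂ^{N|N})^⊗3, the following identities hold: J₁J₂P₁₂·J₂J₃P₂₃ = J₂J₃P₂₃P₁₃ and P₁₃·J₁J₂P₁₂ = −J₂J₃P₂₃P₁₃. In particular J₁J₂P₁₂·J₂J₃P₂₃ = −P₁₃·J₁J₂P₁₂. -/
open Matrix BigOperators

noncomputable section

/-- Index set `{±1,…,±N}`: `false` codes a positive index, `true` a negative one. -/
abbrev Idx (N : ℕ) := Bool × Fin N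

/-- Parity: positive indices are even, negative indices are odd. -/
def pty {N : ℕ} (i : Idx N) : ℕ := if i.1 then 1 else 0

/-- The index `-i`. -/
def nneg {N : ℕ} (i : Idx N) : Idx N := (!i.1, i.2)

/-- Matrix unit `e_{ij}` in `End(ℂ^{N|N})`. -/
def Em {N : ℕ} (i j : Idx N) : Matrix (Idx N) (Idx N) ℂ := Matrix.single i j 1

/-- `J = Σ_i (-1)^{p_i} e_{i,-i}`. -/
def Jmat (N : ℕ) : Matrix (Idx N) (Idx N) ℂ := ∑ i : Idx N, ((-1 : ℂ) ^ pty i) • Em i (nneg i)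

abbrev M3 (N : ℕ) := Matrix (Idx N × Idx N × Idx N) (Idx N × Idx N × Idx N) ℂ

/-- Graded (Koszul-sign) Kronecker product of three homogeneous matrices acting on
`(ℂ^{N|N})^{⊗3}`; `db`, `dc` are the `ℤ₂`-degrees of `b` and `c`. -/
def gk3 {N : ℕ} (a b c : Matrix (Idx N) (Idx N) ℂ) (db dc : ℕ) : M3 N :=
  fun x y => (-1 : ℂ) ^ (db * pty y.1 + dc * (pty y.1 + pty y.2.1)) *
    (a x.1 y.1 * (b x.2.1 y.2.1 * c x.2.2 y.2.2))

/-- Superpermutation `P₁₂ = Σ_{i,j} (-1)^{p_j} e_{ij} ⊗ e_{ji} ⊗ 1`. -/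
def P12 (N : ℕ) : M3 N :=
  ∑ i : Idx N, ∑ j : Idx N, ((-1 : ℂ) ^ pty j) • gk3 (Em i j) (Em j i) 1 (pty i + pty j) 0

/-- Superpermutation `P₁₃ = Σ_{i,j} (-1)^{p_j} e_{ij} ⊗ 1 ⊗ e_{ji}`. -/
def P13 (N : ℕ) : M3 N :=
  ∑ i : Idx N, ∑ j : Idx N, ((-1 : ℂ) ^ pty j) • gk3 (Em i j) 1 (Em j i) 0 (pty i + pty j)

/-- Superpermutation `P₂₃ = Σ_{i,j} (-1)^{p_j} 1 ⊗ e_{ij} ⊗ e_{ji}`. -/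
def P23 (N : ℕ) : M3 N :=
  ∑ i : Idx N, ∑ j : Idx N,
    ((-1 : ℂ) ^ pty j) • gk3 1 (Em i j) (Em j i) (pty i + pty j) (pty i + pty j)

/-- `J` acting on the first tensor factor of `(ℂ^{N|N})^{⊗3}`. -/
def J1 (N : ℕ) : M3 N := gk3 (Jmat N) 1 1 0 0
/-- `J` acting on the second tensor factor (with Koszul signs). -/
def J2 (N : ℕ) : M3 N := gk3 1 (Jmat N) 1 1 0
/-- `J` acting on the third tensor factor (with Koszul signs). -/
def J3 (N : ℕ) : M3 N := gk3 1 1 (Jmat N) 0 1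


section Aux

lemma sum_ite_const' {α : Type*} [Fintype α] (c : Prop) [Decidable c] (f : α → ℂ) :
    (∑ x : α, if c then f x else 0) = if c then ∑ x : α, f x else 0 := by
  split_ifs <;> simp

/-- A "monomial" matrix: entry `s y` at position `(σ y, y)`. -/
def mono {α : Type*} [DecidableEq α] (σ : α → α) (s : α → ℂ) : Matrix α α ℂ :=
  Matrix.of fun x y => if x = σ y then s y else 0

lemma mono_mul {α : Type*} [DecidableEq α] [Fintype α] (σ σ' : α → α) (s s' : α → ℂ) :
    mono σ s * mono σ' s' = mono (fun y => σ (σ' y)) (fun y => s (σ' y) * s' y) := by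
  classical
  ext x y
  simp only [mono, Matrix.mul_apply, Matrix.of_apply]
  rw [Finset.sum_eq_single (σ' y)]
  · simp
  · intro b _ hb; simp [hb]
  · simp

lemma P12_eq (N : ℕ) : P12 N = mono (fun y => (y.2.1, y.1, y.2.2))
    (fun y => (-1 : ℂ) ^ (pty y.1 + (pty y.2.1 + pty y.1) * pty y.1)) := by
  ext x y
  obtain ⟨x1, x2, x3⟩ := x
  obtain ⟨y1, y2, y3⟩ := y
  simp only [P12, Matrix.sum_apply, Matrix.smul_apply, gk3, Em, Matrix.single,
    Matrix.of_apply, Matrix.one_apply, smul_eq_mul, mono]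
  simp only [mul_ite, ite_mul, mul_one, mul_zero, zero_mul, one_mul, ite_and,
    sum_ite_const', Finset.sum_ite_eq, Finset.sum_ite_eq', Finset.mem_univ, if_true,
    Prod.mk.injEq]
  split_ifs <;> simp_all [pow_add]

lemma P13_eq (N : ℕ) : P13 N = mono (fun y => (y.2.2, y.2.1, y.1))
    (fun y => (-1 : ℂ) ^ (pty y.1 + (pty y.2.2 + pty y.1) * (pty y.1 + pty y.2.1))) := by
  ext x y
  obtain ⟨x1, x2, x3⟩ := x
  obtain ⟨y1, y2, y3⟩ := y
  simp only [P13, Matrix.sum_apply, Matrix.smul_apply, gk3, Em, Matrix.single,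
    Matrix.of_apply, Matrix.one_apply, smul_eq_mul, mono]
  simp only [mul_ite, ite_mul, mul_one, mul_zero, zero_mul, one_mul, ite_and,
    sum_ite_const', Finset.sum_ite_eq, Finset.sum_ite_eq', Finset.mem_univ, if_true,
    Prod.mk.injEq]
  split_ifs <;> simp_all [pow_add]

lemma P23_eq (N : ℕ) : P23 N = mono (fun y => (y.1, y.2.2, y.2.1))
    (fun y => (-1 : ℂ) ^ (pty y.2.1 + ((pty y.2.2 + pty y.2.1) * pty y.1 +
      (pty y.2.2 + pty y.2.1) * (pty y.1 + pty y.2.1)))) := by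
  ext x y
  obtain ⟨x1, x2, x3⟩ := x
  obtain ⟨y1, y2, y3⟩ := y
  simp only [P23, Matrix.sum_apply, Matrix.smul_apply, gk3, Em, Matrix.single,
    Matrix.of_apply, Matrix.one_apply, smul_eq_mul, mono]
  simp only [mul_ite, ite_mul, mul_one, mul_zero, zero_mul, one_mul, ite_and,
    sum_ite_const', Finset.sum_ite_eq, Finset.sum_ite_eq', Finset.mem_univ, if_true,
    Prod.mk.injEq]
  split_ifs <;> simp_all [pow_add, mul_add]

lemma nneg_nneg {N : ℕ} (i : Idx N) : nneg (nneg i) = i := by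
  simp [nneg]

lemma nneg_eq_iff {N : ℕ} {i j : Idx N} : nneg i = j ↔ i = nneg j := by
  constructor <;> rintro rfl <;> simp [nneg_nneg]

lemma J1_eq (N : ℕ) : J1 N = mono (fun y => (nneg y.1, y.2.1, y.2.2))
    (fun y => (-1 : ℂ) ^ pty (nneg y.1)) := by
  ext x y
  obtain ⟨x1, x2, x3⟩ := x
  obtain ⟨y1, y2, y3⟩ := y
  simp only [J1, Jmat, gk3, Em, Matrix.single, Matrix.sum_apply, Matrix.smul_apply,
    Matrix.of_apply, Matrix.one_apply, smul_eq_mul, mono]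
  simp only [mul_ite, ite_mul, mul_one, mul_zero, zero_mul, one_mul, ite_and,
    sum_ite_const', Finset.sum_ite_eq, Finset.sum_ite_eq', Finset.mem_univ, if_true,
    Prod.mk.injEq, nneg_eq_iff]
  split_ifs <;> simp_all [pow_add]

lemma J2_eq (N : ℕ) : J2 N = mono (fun y => (y.1, nneg y.2.1, y.2.2))
    (fun y => (-1 : ℂ) ^ (pty y.1 + pty (nneg y.2.1))) := by
  ext x y
  obtain ⟨x1, x2, x3⟩ := x
  obtain ⟨y1, y2, y3⟩ := y
  simp only [J2, Jmat, gk3, Em, Matrix.single, Matrix.sum_apply, Matrix.smul_apply,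
    Matrix.of_apply, Matrix.one_apply, smul_eq_mul, mono]
  simp only [mul_ite, ite_mul, mul_one, mul_zero, zero_mul, one_mul, ite_and,
    sum_ite_const', Finset.sum_ite_eq, Finset.sum_ite_eq', Finset.mem_univ, if_true,
    Prod.mk.injEq, nneg_eq_iff]
  split_ifs <;> simp_all [pow_add]

lemma J3_eq (N : ℕ) : J3 N = mono (fun y => (y.1, y.2.1, nneg y.2.2))
    (fun y => (-1 : ℂ) ^ ((pty y.1 + pty y.2.1) + pty (nneg y.2.2))) := by
  ext x y
  obtain ⟨x1, x2, x3⟩ := x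
  obtain ⟨y1, y2, y3⟩ := y
  simp only [J3, Jmat, gk3, Em, Matrix.single, Matrix.sum_apply, Matrix.smul_apply,
    Matrix.of_apply, Matrix.one_apply, smul_eq_mul, mono]
  simp only [mul_ite, ite_mul, mul_one, mul_zero, zero_mul, one_mul, ite_and,
    sum_ite_const', Finset.sum_ite_eq, Finset.sum_ite_eq', Finset.mem_univ, if_true,
    Prod.mk.injEq, nneg_eq_iff]
  split_ifs <;> simp_all [pow_add]

end Aux

/-- The identities `J₁J₂P₁₂ · J₂J₃P₂₃ = J₂J₃P₂₃P₁₃` and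
`P₁₃ · J₁J₂P₁₂ = −J₂J₃P₂₃P₁₃`, hence `J₁J₂P₁₂ · J₂J₃P₂₃ = −P₁₃ · J₁J₂P₁₂`,
hold in `End(ℂ^{N|N})^{⊗3}`. -/
theorem JJP_identities (N : ℕ) :
    (J1 N * J2 N * P12 N) * (J2 N * J3 N * P23 N) = J2 N * J3 N * P23 N * P13 N ∧
    P13 N * (J1 N * J2 N * P12 N) = -(J2 N * J3 N * P23 N * P13 N) ∧
    (J1 N * J2 N * P12 N) * (J2 N * J3 N * P23 N) = -(P13 N * (J1 N * J2 N * P12 N)) := by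
  rw [J1_eq, J2_eq, J3_eq, P12_eq, P13_eq, P23_eq]
  simp only [mono_mul]
  refine ⟨?_, ?_, ?_⟩ <;>
  · ext x y
    obtain ⟨⟨b1, k1⟩, ⟨b2, k2⟩, ⟨b3, k3⟩⟩ := y
    simp only [mono, Matrix.of_apply, Matrix.neg_apply, nneg, pty]
    rcases b1 <;> rcases b2 <;> rcases b3 <;>
      · simp only [Bool.not_true, Bool.not_false, if_true, if_false]
        split_ifs <;> simp_all <;> norm_num
end
end

section
/- The rational queer R-matrix R^ℏ₁₂(u,v) = (1/ℏ)·Id + P₁₂/(u−v) + J₁J₂P₁₂/(u+v) satisfies the unitarity property: R^ℏ₁₂(u,v)·R^ℏ₂₁(v,u) = (1/ℏ² − 1/(u−v)² − 1/(u+v)²)·Id, for ℏ, u−v, u+v nonzero. -/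
open Matrix BigOperators

noncomputable section

abbrev M2 (N : ℕ) := Matrix (Idx N × Idx N) (Idx N × Idx N) ℂ

/-- Graded (Koszul-sign) Kronecker product of two homogeneous matrices acting on
`(ℂ^{N|N})^{⊗2}`; `db` is the `ℤ₂`-degree of `b`. -/
def gk2 {N : ℕ} (a b : Matrix (Idx N) (Idx N) ℂ) (db : ℕ) : M2 N :=
  fun x y => (-1 : ℂ) ^ (db * pty y.1) * (a x.1 y.1 * b x.2 y.2)

/-- Superpermutation `P₁₂ = Σ_{i,j} (-1)^{p_j} e_{ij} ⊗ e_{ji}` on two factors. -/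
def P2 (N : ℕ) : M2 N :=
  ∑ i : Idx N, ∑ j : Idx N, ((-1 : ℂ) ^ pty j) • gk2 (Em i j) (Em j i) (pty i + pty j)

/-- `J ⊗ Id`. -/
def J1' (N : ℕ) : M2 N := gk2 (Jmat N) 1 0
/-- `Id ⊗ J` (with Koszul signs). -/
def J2' (N : ℕ) : M2 N := gk2 1 (Jmat N) 1

/-- The rational queer R-matrix `R^ℏ₁₂(u,v) = (1/ℏ)·Id + P₁₂/(u−v) + J₁J₂P₁₂/(u+v)`
on `(ℂ^{N|N})^{⊗2}`. -/
def Rr (N : ℕ) (h u v : ℂ) : M2 N :=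
  h⁻¹ • (1 : M2 N) + (u - v)⁻¹ • P2 N + (u + v)⁻¹ • (J1' N * J2' N * P2 N)

/-- The flipped R-matrix `R^ℏ₂₁(u,v) = (1/ℏ)·Id + P₂₁/(u−v) + J₂J₁P₂₁/(u+v)`,
where `P₂₁ = P₁₂` and `J₂J₁ = −J₁J₂`. -/
def Rr' (N : ℕ) (h u v : ℂ) : M2 N :=
  h⁻¹ • (1 : M2 N) + (u - v)⁻¹ • P2 N - (u + v)⁻¹ • (J1' N * J2' N * P2 N)


/-- Signed permutation matrix on the double index set. -/
def pm {N : ℕ} (σ : Idx N × Idx N → Idx N × Idx N) (s : Idx N × Idx N → ℂ) : M2 N :=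
  Matrix.of fun x y => if y = σ x then s x else 0

lemma pm_mul {N : ℕ} (σ τ : Idx N × Idx N → Idx N × Idx N) (s t : Idx N × Idx N → ℂ) :
    pm σ s * pm τ t = pm (fun x => τ (σ x)) (fun x => s x * t (σ x)) := by
  ext x y
  simp only [pm, Matrix.mul_apply, Matrix.of_apply, ite_mul, zero_mul, mul_ite, mul_zero]
  rw [Finset.sum_eq_single (σ x)] <;> simp +contextual

lemma P2_eq (N : ℕ) :
    P2 N = pm (fun x => (x.2, x.1)) (fun x => (-1 : ℂ) ^ (pty x.1 * pty x.2)) := by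
  ext x y
  simp only [P2, Matrix.sum_apply, Matrix.smul_apply, gk2, Em, Matrix.single,
    Matrix.of_apply, smul_eq_mul, pm]
  rw [Finset.sum_eq_single x.1]
  · rw [Finset.sum_eq_single x.2]
    · obtain ⟨y1, y2⟩ := y
      by_cases h1 : x.2 = y1
      · by_cases h2 : x.1 = y2
        · subst h1; subst h2
          simp only [Prod.mk.injEq, and_self, if_true, if_pos rfl, mul_one]
          obtain ⟨⟨b1, k1⟩, ⟨b2, k2⟩⟩ := x
          rcases b1 <;> rcases b2 <;> norm_num [pty]
        · have h2' : ¬(y2 = x.1) := fun h => h2 h.symm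
          simp [h2, h2', Prod.mk.injEq]
      · have h1' : ¬(y1 = x.2) := fun h => h1 h.symm
        simp [h1, h1', Prod.mk.injEq]
    · intro j _ hj; simp [hj]
    · simp
  · intro i _ hi; simp [hi]
  · simp

lemma Jmat_apply {N : ℕ} (i k : Idx N) :
    Jmat N i k = if k = nneg i then (-1 : ℂ) ^ pty i else 0 := by
  simp only [Jmat, Matrix.sum_apply, Matrix.smul_apply, Em, Matrix.single,
    Matrix.of_apply, smul_eq_mul, mul_ite, mul_one, mul_zero]
  rw [Finset.sum_eq_single i]
  · by_cases hk : k = nneg i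
    · simp [hk]
    · have hk' : ¬(nneg i = k) := fun h => hk h.symm
      simp [hk, hk']
  · intro j _ hj
    simp [hj]
  · simp

lemma J1'_eq (N : ℕ) :
    J1' N = pm (fun x => (nneg x.1, x.2)) (fun x => (-1 : ℂ) ^ pty x.1) := by
  ext x y
  obtain ⟨y1, y2⟩ := y
  simp only [J1', gk2, pm, Matrix.of_apply, Jmat_apply, Matrix.one_apply, Nat.zero_mul,
    pow_zero, one_mul, Prod.mk.injEq, mul_ite, mul_one, mul_zero, ite_mul, zero_mul]
  by_cases h1 : y1 = nneg x.1
  · by_cases h2 : x.2 = y2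
    · simp [h1, h2]
    · have h2' : ¬(y2 = x.2) := fun h => h2 h.symm
      simp [h1, h2, h2']
  · simp [h1]

lemma J2'_eq (N : ℕ) :
    J2' N = pm (fun x => (x.1, nneg x.2))
      (fun x => (-1 : ℂ) ^ pty x.1 * (-1 : ℂ) ^ pty x.2) := by
  ext x y
  obtain ⟨y1, y2⟩ := y
  simp only [J2', gk2, pm, Matrix.of_apply, Jmat_apply, Matrix.one_apply, one_mul,
    Prod.mk.injEq, mul_ite, mul_one, mul_zero, ite_mul, zero_mul]
  by_cases h1 : x.1 = y1
  · by_cases h2 : y2 = nneg x.2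
    · subst h1
      simp [h2]
    · simp [h1, h2]
  · have h1' : ¬(y1 = x.1) := fun h => h1 h.symm
    simp [h1, h1']

lemma pm_congr {N : ℕ} {σ τ : Idx N × Idx N → Idx N × Idx N} {s t : Idx N × Idx N → ℂ}
    (hσ : ∀ x, σ x = τ x) (hs : ∀ x, s x = t x) : pm σ s = pm τ t := by
  ext x y
  simp only [pm, Matrix.of_apply, hσ x, hs x]

lemma one_eq_pm (N : ℕ) : (1 : M2 N) = pm (fun x => x) (fun _ => 1) := by
  ext x y
  simp only [pm, Matrix.of_apply, Matrix.one_apply]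
  by_cases hxy : x = y
  · simp [hxy]
  · simp [hxy, Ne.symm hxy]

lemma hPP (N : ℕ) : P2 N * P2 N = 1 := by
  rw [P2_eq, pm_mul, one_eq_pm]
  apply pm_congr
  · intro x; rfl
  · rintro ⟨⟨b1, k1⟩, ⟨b2, k2⟩⟩
    rcases b1 <;> rcases b2 <;> norm_num [pty]

lemma hQQ (N : ℕ) : (J1' N * J2' N * P2 N) * (J1' N * J2' N * P2 N) = 1 := by
  rw [J1'_eq, J2'_eq, P2_eq]
  simp only [pm_mul]
  rw [one_eq_pm]
  apply pm_congr
  · rintro ⟨⟨b1, k1⟩, ⟨b2, k2⟩⟩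
    simp [nneg]
  · rintro ⟨⟨b1, k1⟩, ⟨b2, k2⟩⟩
    rcases b1 <;> rcases b2 <;> norm_num [pty, nneg]

lemma pm_neg {N : ℕ} (σ : Idx N × Idx N → Idx N × Idx N) (s : Idx N × Idx N → ℂ) :
    -(pm σ s) = pm σ (fun x => -(s x)) := by
  ext x y
  simp only [pm, Matrix.neg_apply, Matrix.of_apply]
  split <;> simp

lemma hQP (N : ℕ) :
    (J1' N * J2' N * P2 N) * P2 N = -(P2 N * (J1' N * J2' N * P2 N)) := by
  rw [J1'_eq, J2'_eq, P2_eq]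
  simp only [pm_mul]
  rw [pm_neg]
  apply pm_congr
  · rintro ⟨⟨b1, k1⟩, ⟨b2, k2⟩⟩
    simp [nneg]
  · rintro ⟨⟨b1, k1⟩, ⟨b2, k2⟩⟩
    rcases b1 <;> rcases b2 <;> norm_num [pty, nneg]

/-- Unitarity of the rational queer R-matrix:
`R^ℏ₁₂(u,v)·R^ℏ₂₁(v,u) = (1/ℏ² − 1/(u−v)² − 1/(u+v)²)·Id`. -/
theorem rational_queer_unitarity (N : ℕ) (h u v : ℂ)
    (hh : h ≠ 0) (huv : u - v ≠ 0) (huv' : u + v ≠ 0) :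
    Rr N h u v * Rr' N h v u =
      (1 / h ^ 2 - 1 / (u - v) ^ 2 - 1 / (u + v) ^ 2) • (1 : M2 N) := by
  have hP := hPP N
  have hQ := hQQ N
  have hqp := hQP N
  set Q := J1' N * J2' N * P2 N with hQdef
  unfold Rr Rr'
  rw [← hQdef]
  have e1 : (v - u)⁻¹ = -(u - v)⁻¹ := by rw [show v - u = -(u - v) by ring, inv_neg]
  have e2 : v + u = u + v := add_comm v u
  have e3 : (1 / h ^ 2 - 1 / (u - v) ^ 2 - 1 / (u + v) ^ 2)
      = h⁻¹ * h⁻¹ - (u - v)⁻¹ * (u - v)⁻¹ - (u + v)⁻¹ * (u + v)⁻¹ := by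
    rw [one_div, one_div, one_div, pow_two, pow_two, pow_two, mul_inv, mul_inv, mul_inv]
  rw [e1, e2, e3]
  simp only [sub_eq_add_neg, neg_smul, add_mul, mul_add, smul_mul_assoc, mul_smul_comm,
    smul_smul, mul_one, one_mul, hP, hQ, hqp, smul_neg, mul_neg, neg_neg]
  module
end
end

section
/- Let D^ℏ₁₂ ∈ End(ℂ^{N|N})^⊗2 be the diagonal matrix D^ℏ₁₂ = π·cot(πℏ)·Σ_i (e_{ii}⊗e_{ii} + e_{ii}⊗e_{−i,−i}) + (π/sin(πℏ))·Σ_{|i|≠|j|} exp((πiℏ/N)((|i|−|j|) − N·sign(|i|−|j|)))·e_{ii}⊗e_{jj}. Then for complex x, y with x, y, x−y not integers: D^x₁₂D^y₂₃ − D^y₁₃D^{x−y}₁₂ − D^{y−x}₂₃D^x₁₃ = −π²·Σ_{|i|=|j|=|k|} e_{ii}⊗e_{jj}⊗e_{kk}. -/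
open Matrix BigOperators

noncomputable section

/-- `π` as a complex number. -/
def cpi : ℂ := Real.pi

/-- The magnitude `|i| ∈ {1,…,N}` of an index. -/
def mag {N : ℕ} (i : Idx N) : ℤ := (i.2 : ℤ) + 1

/-- The signed value `i ∈ {±1,…,±N}` of an index. -/
def sval {N : ℕ} (i : Idx N) : ℤ := if i.1 then -((i.2 : ℤ) + 1) else (i.2 : ℤ) + 1

/-- `z` is not an integer. -/
def NotInt (z : ℂ) : Prop := ∀ n : ℤ, z ≠ (n : ℂ)

/-- Diagonal entries of the matrix `D^ℏ`:
`π·cot(πℏ)` when `|i| = |j|`, and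
`(π/sin(πℏ))·exp((πiℏ/N)((|i|−|j|) − N·sign(|i|−|j|)))` when `|i| ≠ |j|`. -/
def dval (N : ℕ) (h : ℂ) (i j : Idx N) : ℂ :=
  if i.2 = j.2 then cpi * Complex.cot (cpi * h)
  else (cpi / Complex.sin (cpi * h)) *
    Complex.exp ((cpi * Complex.I * h / N) *
      (((mag i - mag j) - N * Int.sign (mag i - mag j) : ℤ) : ℂ))

/-- `D^ℏ` on legs 1,2 of `(ℂ^{N|N})^{⊗3}`. -/
def D12 (N : ℕ) (h : ℂ) : M3 N := Matrix.diagonal fun x => dval N h x.1 x.2.1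
/-- `D^ℏ` on legs 1,3. -/
def D13 (N : ℕ) (h : ℂ) : M3 N := Matrix.diagonal fun x => dval N h x.1 x.2.2
/-- `D^ℏ` on legs 2,3. -/
def D23 (N : ℕ) (h : ℂ) : M3 N := Matrix.diagonal fun x => dval N h x.2.1 x.2.2

/-- `T = Σ_{|i|=|j|=|k|} e_{ii} ⊗ e_{jj} ⊗ e_{kk}`. -/
def Tmat (N : ℕ) : M3 N :=
  Matrix.diagonal fun x => if x.1.2 = x.2.1.2 ∧ x.2.1.2 = x.2.2.2 then (1 : ℂ) else 0

/-- `exp((πiw/N)((i−j) − N·sign(i−j)))/sin(πw)` for signed indices `i ≠ j`. -/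
def phiw (N : ℕ) (w : ℂ) (i j : Idx N) : ℂ :=
  Complex.exp ((cpi * Complex.I * w / N) *
    (((sval i - sval j) - N * Int.sign (sval i - sval j) : ℤ) : ℂ)) / Complex.sin (cpi * w)

/-- The spectral part `Q(u,v)` of the trigonometric queer R-matrix, on legs 1,2. -/
def Q12 (N : ℕ) (u v : ℂ) : M3 N :=
  cpi • (∑ i : Idx N,
      ((-1 : ℂ) ^ pty i) • (Complex.cot (cpi * (u - v)) • gk3 (Em i i) (Em i i) 1 0 0 +
        Complex.cot (cpi * (u + v)) • gk3 (Em i i) (Em (nneg i) (nneg i)) 1 0 0)) +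
  cpi • (∑ i : Idx N, ∑ j : Idx N,
      if i ≠ j then
        ((-1 : ℂ) ^ pty j) •
          (phiw N (u - v) i j • gk3 (Em i j) (Em j i) 1 (pty i + pty j) 0 +
            phiw N (u + v) i j • gk3 (Em i j) (Em (nneg j) (nneg i)) 1 (pty i + pty j) 0)
      else 0)

/-- The spectral part `Q(u,v)` on legs 1,3. -/
def Q13 (N : ℕ) (u v : ℂ) : M3 N :=
  cpi • (∑ i : Idx N,
      ((-1 : ℂ) ^ pty i) • (Complex.cot (cpi * (u - v)) • gk3 (Em i i) 1 (Em i i) 0 0 +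
        Complex.cot (cpi * (u + v)) • gk3 (Em i i) 1 (Em (nneg i) (nneg i)) 0 0)) +
  cpi • (∑ i : Idx N, ∑ j : Idx N,
      if i ≠ j then
        ((-1 : ℂ) ^ pty j) •
          (phiw N (u - v) i j • gk3 (Em i j) 1 (Em j i) 0 (pty i + pty j) +
            phiw N (u + v) i j • gk3 (Em i j) 1 (Em (nneg j) (nneg i)) 0 (pty i + pty j))
      else 0)

/-- The spectral part `Q(u,v)` on legs 2,3. -/
def Q23 (N : ℕ) (u v : ℂ) : M3 N :=
  cpi • (∑ i : Idx N,
      ((-1 : ℂ) ^ pty i) • (Complex.cot (cpi * (u - v)) • gk3 1 (Em i i) (Em i i) 0 0 +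
        Complex.cot (cpi * (u + v)) • gk3 1 (Em i i) (Em (nneg i) (nneg i)) 0 0)) +
  cpi • (∑ i : Idx N, ∑ j : Idx N,
      if i ≠ j then
        ((-1 : ℂ) ^ pty j) •
          (phiw N (u - v) i j •
              gk3 1 (Em i j) (Em j i) (pty i + pty j) (pty i + pty j) +
            phiw N (u + v) i j •
              gk3 1 (Em i j) (Em (nneg j) (nneg i)) (pty i + pty j) (pty i + pty j))
      else 0)


/-! ### Auxiliary lemmas -/

lemma sign_lemma' (d1 d2 : ℤ) (h1 : d1 ≠ 0) (h2 : d2 ≠ 0) (h3 : d1 + d2 ≠ 0) :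
    d1.sign + d2.sign - (d1 + d2).sign = 1 ∨ d1.sign + d2.sign - (d1 + d2).sign = -1 := by
  rcases lt_trichotomy d1 0 with a | a | a <;> rcases lt_trichotomy d2 0 with b | b | b <;>
    rcases lt_trichotomy (d1 + d2) 0 with c | c | c <;>
    simp_all [Int.sign_eq_one_of_pos, Int.sign_eq_neg_one_of_neg] <;> omega

lemma sin_pi_ne' (z : ℂ) (h : NotInt z) : Complex.sin (cpi * z) ≠ 0 := by
  rw [Complex.sin_ne_zero_iff]
  intro k hk
  apply h k
  have hpi : (Real.pi : ℂ) ≠ 0 := Complex.ofReal_ne_zero.mpr Real.pi_ne_zero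
  apply mul_left_cancel₀ hpi
  rw [show (Real.pi : ℂ) * k = (k : ℂ) * Real.pi by ring, ← hk]
  simp [cpi]

lemma Bcase5 (X Y ε : ℂ) (hε : ε = 1 ∨ ε = -1) :
    Complex.sin (X - Y) - Complex.exp (ε * Y * Complex.I) * Complex.sin X +
      Complex.exp (ε * X * Complex.I) * Complex.sin Y = 0 := by
  rcases hε with h | h <;> subst h
  · rw [show (1:ℂ) * Y * Complex.I = Y * Complex.I by ring,
      show (1:ℂ) * X * Complex.I = X * Complex.I by ring,
      Complex.exp_mul_I, Complex.exp_mul_I, Complex.sin_sub]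
    ring
  · rw [show (-1:ℂ) * Y * Complex.I = (-Y) * Complex.I by ring,
      show (-1:ℂ) * X * Complex.I = (-X) * Complex.I by ring,
      Complex.exp_mul_I, Complex.exp_mul_I, Complex.sin_neg, Complex.cos_neg,
      Complex.sin_neg, Complex.cos_neg, Complex.sin_sub]
    ring

lemma Ccase1 (X Y : ℂ) (hX : Complex.sin X ≠ 0) (hY : Complex.sin Y ≠ 0)
    (hXY : Complex.sin (X - Y) ≠ 0) :
    Complex.cot X * Complex.cot Y - Complex.cot Y * Complex.cot (X - Y) -
      Complex.cot (Y - X) * Complex.cot X = -1 := by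
  rw [show Y - X = -(X - Y) by ring]
  rw [Complex.cot_eq_cos_div_sin, Complex.cot_eq_cos_div_sin, Complex.cot_eq_cos_div_sin,
    Complex.cot_eq_cos_div_sin, Complex.sin_neg, Complex.cos_neg]
  field_simp
  rw [Complex.sin_sub, Complex.cos_sub]
  ring

lemma Ccase2 (X Y E1 E2 E3 : ℂ) (hX : Complex.sin X ≠ 0) (hY : Complex.sin Y ≠ 0)
    (hXY : Complex.sin (X - Y) ≠ 0) (he : E2 * E3 = E1) :
    (cpi * Complex.cot X) * (cpi / Complex.sin Y * E1) -
      (cpi / Complex.sin Y * E1) * (cpi * Complex.cot (X - Y)) -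
      (cpi / Complex.sin (Y - X) * E2) * (cpi / Complex.sin X * E3) = 0 := by
  rw [← he, show Y - X = -(X - Y) by ring, Complex.sin_neg, Complex.cot_eq_cos_div_sin,
    Complex.cot_eq_cos_div_sin]
  field_simp
  rw [Complex.sin_sub, Complex.cos_sub]
  linear_combination (-(cpi^2 * E2 * E3 * Complex.sin Y)) * Complex.sin_sq_add_cos_sq X

lemma Ccase3 (X Y E1 E2 E3 : ℂ) (hX : Complex.sin X ≠ 0) (hY : Complex.sin Y ≠ 0)
    (hXY : Complex.sin (X - Y) ≠ 0) (he : E2 * E3 = E1) :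
    (cpi / Complex.sin X * E1) * (cpi * Complex.cot Y) -
      (cpi / Complex.sin Y * E2) * (cpi / Complex.sin (X - Y) * E3) -
      (cpi * Complex.cot (Y - X)) * (cpi / Complex.sin X * E1) = 0 := by
  rw [← he, show Y - X = -(X - Y) by ring, Complex.cot_eq_cos_div_sin,
    Complex.cot_eq_cos_div_sin, Complex.sin_neg, Complex.cos_neg]
  field_simp
  rw [Complex.sin_sub, Complex.cos_sub]
  linear_combination (cpi^2 * E2 * E3 * Complex.sin X) * Complex.sin_sq_add_cos_sq Y

lemma Ccase4 (X Y E1 E2 G H : ℂ) (hX : Complex.sin X ≠ 0) (hY : Complex.sin Y ≠ 0)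
    (hXY : Complex.sin (X - Y) ≠ 0) (h1 : E1 * E2 = G) (h2 : H = G) :
    (cpi / Complex.sin X * E1) * (cpi / Complex.sin Y * E2) -
      (cpi * Complex.cot Y) * (cpi / Complex.sin (X - Y) * G) -
      (cpi / Complex.sin (Y - X) * H) * (cpi * Complex.cot X) = 0 := by
  rw [h2, ← h1, show Y - X = -(X - Y) by ring, Complex.sin_neg, Complex.cot_eq_cos_div_sin,
    Complex.cot_eq_cos_div_sin]
  field_simp
  rw [Complex.sin_sub]
  ring

lemma Ccase5 (X Y ε e1 e2 e3 e4 e5 e6 : ℂ) (hX : Complex.sin X ≠ 0) (hY : Complex.sin Y ≠ 0)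
    (hXY : Complex.sin (X - Y) ≠ 0) (hε : ε = 1 ∨ ε = -1)
    (h1 : e3 * e4 = e1 * e2 * Complex.exp (ε * Y * Complex.I))
    (h2 : e5 * e6 = e1 * e2 * Complex.exp (ε * X * Complex.I)) :
    (cpi / Complex.sin X * e1) * (cpi / Complex.sin Y * e2) -
      (cpi / Complex.sin Y * e3) * (cpi / Complex.sin (X - Y) * e4) -
      (cpi / Complex.sin (Y - X) * e5) * (cpi / Complex.sin X * e6) = 0 := by
  have hB := Bcase5 X Y ε hε
  rw [show Y - X = -(X - Y) by ring, Complex.sin_neg]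
  field_simp
  linear_combination
    (-(cpi^2) * Complex.sin X) * h1 + (cpi^2 * Complex.sin Y) * h2 + (cpi^2 * e1 * e2) * hB

/-- The scalar (entrywise) form of the identity. -/
lemma dval_identity (N : ℕ) (x y : ℂ) (hsx : Complex.sin (cpi * x) ≠ 0)
    (hsy : Complex.sin (cpi * y) ≠ 0) (hsxy : Complex.sin (cpi * x - cpi * y) ≠ 0)
    (i j k : Idx N) :
    dval N x i j * dval N y j k - dval N y i k * dval N (x - y) i j -
      dval N (y - x) j k * dval N x i k =
      -(cpi ^ 2 * if i.2 = j.2 ∧ j.2 = k.2 then 1 else 0) := by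
  have e1 : cpi * (x - y) = cpi * x - cpi * y := by ring
  have e2 : cpi * (y - x) = cpi * y - cpi * x := by ring
  by_cases h1 : i.2 = j.2 <;> by_cases h2 : j.2 = k.2
  · -- all magnitudes equal
    have h3 : i.2 = k.2 := h1.trans h2
    simp only [dval, if_pos h1, if_pos h2, if_pos h3, if_pos (And.intro h1 h2), e1, e2]
    linear_combination (cpi^2) * Ccase1 (cpi * x) (cpi * y) hsx hsy hsxy
  · -- |i| = |j| ≠ |k|
    have h3 : ¬ i.2 = k.2 := fun h => h2 (h1.symm.trans h)
    have hmij : mag i = mag j := by simp [mag, h1]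
    simp only [dval, if_pos h1, if_neg h2, if_neg h3, if_neg (fun h : i.2 = j.2 ∧ j.2 = k.2 => h2 h.2), e1, e2, hmij]
    rw [mul_zero, neg_zero]
    refine Ccase2 (cpi * x) (cpi * y) _ _ _ hsx hsy hsxy ?_
    rw [← Complex.exp_add]
    congr 1
    ring
  · -- |i| ≠ |j| = |k|
    have h3 : ¬ i.2 = k.2 := fun h => h1 (h.trans h2.symm)
    have hmkj : mag k = mag j := by simp [mag, h2]
    simp only [dval, if_neg h1, if_pos h2, if_neg h3, if_neg (fun h : i.2 = j.2 ∧ j.2 = k.2 => h1 h.1), e1, e2, hmkj]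
    rw [mul_zero, neg_zero]
    refine Ccase3 (cpi * x) (cpi * y) _ _ _ hsx hsy hsxy ?_
    rw [← Complex.exp_add]
    congr 1
    ring
  · by_cases h3 : i.2 = k.2
    · -- |i| = |k| ≠ |j|
      have hmik : mag i = mag k := by simp [mag, h3]
      simp only [dval, if_neg h1, if_neg h2, if_pos h3, if_neg (fun h : i.2 = j.2 ∧ j.2 = k.2 => h1 h.1), e1, e2, hmik]
      rw [mul_zero, neg_zero]
      have hM : (mag k - mag j - N * (mag k - mag j).sign : ℤ) =
          -(mag j - mag k - N * (mag j - mag k).sign) := by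
        rw [show mag k - mag j = -(mag j - mag k) by ring, Int.sign_neg]
        ring
      refine Ccase4 (cpi * x) (cpi * y) _ _ _ _ hsx hsy hsxy ?_ ?_
      · rw [← Complex.exp_add]
        congr 1
        rw [hM]
        push_cast
        ring
      · congr 1
        rw [hM]
        push_cast
        ring
    · -- all magnitudes distinct
      have hN : (N : ℂ) ≠ 0 := by
        have := j.2.pos
        exact_mod_cast Nat.cast_ne_zero.mpr (by omega)
      have hd1 : (mag i - mag j : ℤ) ≠ 0 := by
        simp only [mag] at *
        intro h; apply h1; apply Fin.ext; omega
      have hd2 : (mag j - mag k : ℤ) ≠ 0 := by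
        simp only [mag] at *
        intro h; apply h2; apply Fin.ext; omega
      have hd3 : (mag i - mag j + (mag j - mag k) : ℤ) ≠ 0 := by
        simp only [mag] at *
        intro h; apply h3; apply Fin.ext; omega
      obtain hε | hε := sign_lemma' _ _ hd1 hd2 hd3
      all_goals {
        simp only [dval, if_neg h1, if_neg h2, if_neg h3, if_neg (fun h : i.2 = j.2 ∧ j.2 = k.2 => h1 h.1), e1, e2]
        rw [mul_zero, neg_zero]
        refine Ccase5 (cpi * x) (cpi * y)
          (((mag i - mag j).sign + (mag j - mag k).sign
            - (mag i - mag j + (mag j - mag k)).sign : ℤ) : ℂ)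
          _ _ _ _ _ _ hsx hsy hsxy ?_ ?_ ?_
        · rw [hε]; norm_num
        · rw [← Complex.exp_add, ← Complex.exp_add, ← Complex.exp_add]
          congr 1
          have key : (mag i - mag k - N * (mag i - mag k).sign : ℤ) =
              (mag i - mag j - N * (mag i - mag j).sign) +
              (mag j - mag k - N * (mag j - mag k).sign) +
              N * ((mag i - mag j).sign + (mag j - mag k).sign
                - (mag i - mag j + (mag j - mag k)).sign) := by
            rw [show (mag i - mag k : ℤ) = mag i - mag j + (mag j - mag k) by ring]
            ring
          rw [key]
          push_cast
          field_simp
          ring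
        · rw [← Complex.exp_add, ← Complex.exp_add, ← Complex.exp_add]
          congr 1
          have key : (mag i - mag k - N * (mag i - mag k).sign : ℤ) =
              (mag i - mag j - N * (mag i - mag j).sign) +
              (mag j - mag k - N * (mag j - mag k).sign) +
              N * ((mag i - mag j).sign + (mag j - mag k).sign
                - (mag i - mag j + (mag j - mag k)).sign) := by
            rw [show (mag i - mag k : ℤ) = mag i - mag j + (mag j - mag k) by ring]
            ring
          rw [key]
          push_cast
          field_simp
          ring
      }

/-- The diagonal part `D^ℏ` of the trigonometric queer R-matrix satisfies
`D^x₁₂D^y₂₃ − D^y₁₃D^{x−y}₁₂ − D^{y−x}₂₃D^x₁₃ = −π²·Σ_{|i|=|j|=|k|} e_{ii}⊗e_{jj}⊗e_{kk}`. -/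
theorem D_identity (N : ℕ) (x y : ℂ) (hx : NotInt x) (hy : NotInt y) (hxy : NotInt (x - y)) :
    D12 N x * D23 N y - D13 N y * D12 N (x - y) - D23 N (y - x) * D13 N x =
      -((cpi ^ 2) • Tmat N) := by
  have hsx := sin_pi_ne' x hx
  have hsy := sin_pi_ne' y hy
  have hsxy : Complex.sin (cpi * x - cpi * y) ≠ 0 := by
    have := sin_pi_ne' (x - y) hxy
    rwa [show cpi * (x - y) = cpi * x - cpi * y by ring] at this
  unfold D12 D13 D23 Tmat
  rw [Matrix.diagonal_mul_diagonal, Matrix.diagonal_mul_diagonal, Matrix.diagonal_mul_diagonal,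
    ← Matrix.diagonal_smul, Matrix.diagonal_neg, Matrix.diagonal_sub, Matrix.diagonal_sub]
  refine congrArg Matrix.diagonal (funext fun p => ?_)
  obtain ⟨i, j, k⟩ := p
  exact dval_identity N x y hsx hsy hsxy i j k
end
end

section
/- With D^ℏ₁₂ as in (the diagonal part of the trigonometric queer R-matrix) and Q₁₂(u,v) its spectral-parameter part, the exchange relations hold in End(ℂ^{N|N})^⊗3: (i) D^x₁₂·Q₂₃(u₂,u₃) = Q₂₃(u₂,u₃)·D^x₁₃; (ii) D^y₁₃·Q₁₂(u₂,u₃) = Q₁₂(u₂,u₃)·D^y₂₃; (iii) D^{y−x}₂₃·Q₁₃(u₁,u₃) = −Q₁₃(u₁,u₃)·D^{x−y}₁₂. -/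
open Matrix BigOperators

noncomputable section

lemma dval_eq_of {N : ℕ} (h : ℂ) {a b a' b' : Idx N} (ha : a.2 = a'.2) (hb : b.2 = b'.2) :
    dval N h a b = dval N h a' b' := by
  unfold dval mag; rw [ha, hb]

lemma dval_neg (N : ℕ) (h : ℂ) (a b : Idx N) : dval N (-h) a b = - dval N h b a := by
  unfold dval mag
  by_cases hab : a.2 = b.2
  · simp only [hab, if_pos rfl, if_pos hab.symm, Complex.cot, mul_neg, Complex.sin_neg,
      Complex.cos_neg, div_neg, mul_neg, if_true]
  · have hba : ¬ b.2 = a.2 := fun h' => hab h'.symm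
    rw [if_neg hab, if_neg hba]
    have e1 : ((((a.2:ℤ)+1) - ((b.2:ℤ)+1)) - N * Int.sign (((a.2:ℤ)+1) - ((b.2:ℤ)+1)) : ℤ)
        = -(((((b.2:ℤ)+1) - ((a.2:ℤ)+1)) - N * Int.sign ((((b.2:ℤ)+1)) - ((a.2:ℤ)+1))) : ℤ) := by
      have : (((a.2:ℤ)+1) - ((b.2:ℤ)+1)) = -((((b.2:ℤ)+1)) - ((a.2:ℤ)+1)) := by ring
      rw [this, Int.sign_neg]; ring
    rw [e1]
    push_cast
    rw [mul_neg, Complex.sin_neg, div_neg, neg_mul]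
    ring_nf

lemma ite_app {N : ℕ} (P : Prop) [Decidable P] (A : M3 N) (x y : Idx N × Idx N × Idx N) :
    (if P then A else (0 : M3 N)) x y = if P then A x y else 0 := by split_ifs <;> simp

set_option linter.unreachableTactic false in
set_option linter.unnecessarySeqFocus false in
set_option linter.unusedTactic false in
lemma Q23_supp {N : ℕ} (u v : ℂ) (x y : Idx N × Idx N × Idx N)
    (h : ¬(x.1 = y.1 ∧ x.2.1.2 = y.2.2.2)) : Q23 N u v x y = 0 := by
  unfold Q23
  simp only [Matrix.add_apply, Matrix.smul_apply, Matrix.sum_apply, ite_app, smul_eq_mul]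
  rw [Finset.sum_eq_zero (fun i _ => ?_),
      Finset.sum_eq_zero (fun i _ => Finset.sum_eq_zero (fun j _ => ?_))]
  · simp
  · push_neg at h
    split_ifs with hij
    · simp only [gk3, Matrix.one_apply, Em, Matrix.single, Matrix.of_apply, nneg,
        Prod.ext_iff]
      split_ifs <;> simp_all [Prod.ext_iff, Fin.ext_iff] <;> omega
    · rfl
  · push_neg at h
    simp only [gk3, Matrix.one_apply, Em, Matrix.single, Matrix.of_apply, nneg,
      Prod.ext_iff]
    split_ifs <;> simp_all [Prod.ext_iff, Fin.ext_iff] <;> omega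

set_option linter.unreachableTactic false in
set_option linter.unnecessarySeqFocus false in
set_option linter.unusedTactic false in
lemma Q12_supp {N : ℕ} (u v : ℂ) (x y : Idx N × Idx N × Idx N)
    (h : ¬(x.1.2 = y.2.1.2 ∧ x.2.2 = y.2.2)) : Q12 N u v x y = 0 := by
  unfold Q12
  simp only [Matrix.add_apply, Matrix.smul_apply, Matrix.sum_apply, ite_app, smul_eq_mul]
  rw [Finset.sum_eq_zero (fun i _ => ?_),
      Finset.sum_eq_zero (fun i _ => Finset.sum_eq_zero (fun j _ => ?_))]
  · simp
  · push_neg at h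
    split_ifs with hij
    · simp only [gk3, Matrix.one_apply, Em, Matrix.single, Matrix.of_apply, nneg,
        Prod.ext_iff]
      split_ifs <;> simp_all [Prod.ext_iff, Fin.ext_iff] <;> omega
    · rfl
  · push_neg at h
    simp only [gk3, Matrix.one_apply, Em, Matrix.single, Matrix.of_apply, nneg,
      Prod.ext_iff]
    split_ifs <;> simp_all [Prod.ext_iff, Fin.ext_iff] <;> omega

set_option linter.unreachableTactic false in
set_option linter.unnecessarySeqFocus false in
set_option linter.unusedTactic false in
lemma Q13_supp {N : ℕ} (u v : ℂ) (x y : Idx N × Idx N × Idx N)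
    (h : ¬(x.2.1 = y.2.1 ∧ x.2.2.2 = y.1.2)) : Q13 N u v x y = 0 := by
  unfold Q13
  simp only [Matrix.add_apply, Matrix.smul_apply, Matrix.sum_apply, ite_app, smul_eq_mul]
  rw [Finset.sum_eq_zero (fun i _ => ?_),
      Finset.sum_eq_zero (fun i _ => Finset.sum_eq_zero (fun j _ => ?_))]
  · simp
  · push_neg at h
    split_ifs with hij
    · simp only [gk3, Matrix.one_apply, Em, Matrix.single, Matrix.of_apply, nneg,
        Prod.ext_iff]
      split_ifs <;> simp_all [Prod.ext_iff, Fin.ext_iff] <;> omega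
    · rfl
  · push_neg at h
    simp only [gk3, Matrix.one_apply, Em, Matrix.single, Matrix.of_apply, nneg,
      Prod.ext_iff]
    split_ifs <;> simp_all [Prod.ext_iff, Fin.ext_iff] <;> omega

lemma diag_comm {n : Type*} [Fintype n] [DecidableEq n] (d e : n → ℂ) (Q : Matrix n n ℂ)
    (h : ∀ x y, Q x y ≠ 0 → d x = e y) :
    Matrix.diagonal d * Q = Q * Matrix.diagonal e := by
  ext x y
  rw [Matrix.diagonal_mul, Matrix.mul_diagonal]
  by_cases hq : Q x y = 0
  · simp [hq]
  · rw [h x y hq]; ring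

lemma diag_anticomm {n : Type*} [Fintype n] [DecidableEq n] (d e : n → ℂ) (Q : Matrix n n ℂ)
    (h : ∀ x y, Q x y ≠ 0 → d x = - e y) :
    Matrix.diagonal d * Q = -(Q * Matrix.diagonal e) := by
  ext x y
  rw [Matrix.neg_apply, Matrix.diagonal_mul, Matrix.mul_diagonal]
  by_cases hq : Q x y = 0
  · simp [hq]
  · rw [h x y hq]; ring

/-- Exchange relations between the diagonal part `D` and the spectral part `Q` of the
trigonometric queer R-matrix:
(i) `D^x₁₂·Q₂₃(u₂,u₃) = Q₂₃(u₂,u₃)·D^x₁₃`;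
(ii) `D^y₁₃·Q₁₂(u₂,u₃) = Q₁₂(u₂,u₃)·D^y₂₃`;
(iii) `D^{y−x}₂₃·Q₁₃(u₁,u₃) = −Q₁₃(u₁,u₃)·D^{x−y}₁₂`. -/
theorem DQ_exchange_relations (N : ℕ) (x y u₁ u₂ u₃ : ℂ)
    (hx : NotInt x) (hy : NotInt y) (hxy : NotInt (x - y))
    (h12 : NotInt (u₁ - u₂)) (h23 : NotInt (u₂ - u₃)) (h13 : NotInt (u₁ - u₃))
    (h12' : NotInt (u₁ + u₂)) (h23' : NotInt (u₂ + u₃)) (h13' : NotInt (u₁ + u₃)) :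
    D12 N x * Q23 N u₂ u₃ = Q23 N u₂ u₃ * D13 N x ∧
    D13 N y * Q12 N u₂ u₃ = Q12 N u₂ u₃ * D23 N y ∧
    D23 N (y - x) * Q13 N u₁ u₃ = -(Q13 N u₁ u₃ * D12 N (x - y)) := by
  refine ⟨?_, ?_, ?_⟩
  · apply diag_comm
    intro p q hq
    have hs := not_imp_not.mpr (Q23_supp (N := N) u₂ u₃ p q) (by simpa using hq)
    push_neg at hs
    rcases not_not.mp (by simpa using fun hc => hq (Q23_supp u₂ u₃ p q hc)) with ⟨h1, h2⟩
    exact dval_eq_of x (by rw [h1]) h2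
  · apply diag_comm
    intro p q hq
    rcases not_not.mp (by simpa using fun hc => hq (Q12_supp u₂ u₃ p q hc)) with ⟨h1, h2⟩
    exact dval_eq_of y h1 (by rw [h2])
  · apply diag_anticomm
    intro p q hq
    rcases not_not.mp (by simpa using fun hc => hq (Q13_supp u₁ u₃ p q hc)) with ⟨h1, h2⟩
    have : (y - x) = -(x - y) := by ring
    rw [this, dval_neg]
    exact congrArg Neg.neg (dval_eq_of (x - y) h2 (by rw [h1]))
end
end

section
/- Let F^ℏ₁₂ = Σ_{a,b=1}^N exp(πiℏ((a−b) − N·sign(a−b))/(2N))·(e_{aa}+e_{−a,−a})⊗(e_{bb}+e_{−b,−b}) ∈ End(ℂ^{N|N})^⊗2, let P₁₂ be the superpermutation and J = Σ_i(−1)^{p_i}e_{i,−i}. Then F^ℏ₁₂·P₁₂·(F^ℏ₂₁)⁻¹ = P₁₂ and F^ℏ₁₂·J₁J₂P₁₂·(F^ℏ₂₁)⁻¹ = J₁J₂P₁₂. -/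
open Matrix BigOperators

noncomputable section

/-- The diagonal twist
`F^ℏ₁₂ = Σ_{a,b=1}^N exp(πiℏ((a−b) − N·sign(a−b))/(2N))·(e_{aa}+e_{−a,−a})⊗(e_{bb}+e_{−b,−b})`. -/
def Ftw (N : ℕ) (h : ℂ) : M2 N :=
  Matrix.diagonal fun x =>
    Complex.exp (cpi * Complex.I * h *
      (((mag x.1 - mag x.2) - N * Int.sign (mag x.1 - mag x.2) : ℤ) : ℂ) / (2 * N))

/-- The leg-swapped twist `F^ℏ₂₁`. -/
def Ftw21 (N : ℕ) (h : ℂ) : M2 N :=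
  Matrix.diagonal fun x =>
    Complex.exp (cpi * Complex.I * h *
      (((mag x.2 - mag x.1) - N * Int.sign (mag x.2 - mag x.1) : ℤ) : ℂ) / (2 * N))

/-- The inverse `(F^ℏ₂₁)⁻¹`. -/
def Ftw21inv (N : ℕ) (h : ℂ) : M2 N :=
  Matrix.diagonal fun x =>
    Complex.exp (-(cpi * Complex.I * h *
      (((mag x.2 - mag x.1) - N * Int.sign (mag x.2 - mag x.1) : ℤ) : ℂ) / (2 * N)))

lemma P2_supp (N : ℕ) (x y : Idx N × Idx N) (hne : ¬ (y.1 = x.2 ∧ y.2 = x.1)) : P2 N x y = 0 := by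
  simp only [P2, Matrix.sum_apply, Pi.smul_apply, smul_eq_mul, Em, Matrix.single]
  apply Finset.sum_eq_zero; intro i _
  apply Finset.sum_eq_zero; intro j _
  by_cases h1 : i = x.1 ∧ j = y.1
  · by_cases h2 : j = x.2 ∧ i = y.2
    · exact absurd ⟨h1.2 ▸ h2.1.symm ▸ rfl, h2.2 ▸ h1.1 ▸ rfl⟩ hne
    · simp [gk2, h2]
  · simp [gk2, h1]

lemma Jmat_supp (N : ℕ) (i j : Idx N) (h : Jmat N i j ≠ 0) : j = nneg i := by
  by_contra hne
  apply h
  simp only [Jmat, Matrix.sum_apply, Pi.smul_apply, smul_eq_mul, Em, Matrix.single]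
  apply Finset.sum_eq_zero; intro k _
  by_cases h1 : k = i ∧ nneg k = j
  · exact absurd (h1.2 ▸ h1.1 ▸ rfl) hne
  · simp [h1]

lemma J1'_supp (N : ℕ) (x y : Idx N × Idx N) (h : J1' N x y ≠ 0) :
    mag y.1 = mag x.1 ∧ y.2 = x.2 := by
  simp only [J1', gk2, Matrix.one_apply, mul_ne_zero_iff] at h
  obtain ⟨-, hJ, hI⟩ := h
  have h1 := Jmat_supp N x.1 y.1 hJ
  have h2 : x.2 = y.2 := by by_contra hc; simp [hc] at hI
  exact ⟨by simp [h1, nneg, mag], h2.symm⟩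

lemma J2'_supp (N : ℕ) (x y : Idx N × Idx N) (h : J2' N x y ≠ 0) :
    y.1 = x.1 ∧ mag y.2 = mag x.2 := by
  simp only [J2', gk2, Matrix.one_apply, mul_ne_zero_iff] at h
  obtain ⟨-, hI, hJ⟩ := h
  have h1 := Jmat_supp N x.2 y.2 hJ
  have h2 : x.1 = y.1 := by by_contra hc; simp [hc] at hI
  exact ⟨h2.symm, by simp [h1, nneg, mag]⟩

lemma JJP_supp (N : ℕ) (x y : Idx N × Idx N) (h : (J1' N * J2' N * P2 N) x y ≠ 0) :
    mag y.1 = mag x.2 ∧ mag y.2 = mag x.1 := by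
  rw [Matrix.mul_apply] at h
  obtain ⟨w, hw⟩ := Finset.exists_ne_zero_of_sum_ne_zero h
  rw [mul_ne_zero_iff, Matrix.mul_apply] at hw
  obtain ⟨hAB, hP⟩ := hw.2
  obtain ⟨z, hz⟩ := Finset.exists_ne_zero_of_sum_ne_zero hAB
  rw [mul_ne_zero_iff] at hz
  have h1 := J1'_supp N x z hz.2.1
  have h2 := J2'_supp N z w hz.2.2
  have h3 : w.1 = y.2 ∧ w.2 = y.1 := by
    by_contra hc
    exact hP (P2_supp N w y (fun hh => hc ⟨hh.2.symm, hh.1.symm⟩))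
  constructor
  · rw [← h3.2] at *; rw [h2.2, h1.2]
  · rw [← h3.1] at *; rw [h2.1, h1.1]

lemma conj_fix (N : ℕ) (h : ℂ) (M : M2 N)
    (hM : ∀ x y : Idx N × Idx N, M x y ≠ 0 → mag y.1 = mag x.2 ∧ mag y.2 = mag x.1) :
    Ftw N h * M * Ftw21inv N h = M := by
  ext x y
  rw [Ftw, Ftw21inv, Matrix.mul_diagonal, Matrix.diagonal_mul]
  by_cases hz : M x y = 0
  · simp [hz]
  · obtain ⟨h1, h2⟩ := hM x y hz
    rw [h1, h2]
    rw [mul_comm (Complex.exp _) (M x y), mul_assoc, ← Complex.exp_add, add_neg_cancel,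
      Complex.exp_zero, mul_one]

/-- `Ftw21inv` is indeed the inverse of `F^ℏ₂₁`, and the twist `F` fixes both the
superpermutation and `J₁J₂P₁₂`:
`F^ℏ₁₂·P₁₂·(F^ℏ₂₁)⁻¹ = P₁₂` and `F^ℏ₁₂·J₁J₂P₁₂·(F^ℏ₂₁)⁻¹ = J₁J₂P₁₂`. -/
theorem twist_fixes_P_and_JJP (N : ℕ) (h : ℂ) :
    Ftw21 N h * Ftw21inv N h = 1 ∧
    Ftw N h * P2 N * Ftw21inv N h = P2 N ∧
    Ftw N h * (J1' N * J2' N * P2 N) * Ftw21inv N h = J1' N * J2' N * P2 N := by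
  refine ⟨?_, ?_, ?_⟩
  · ext x y
    rw [Ftw21, Ftw21inv, Matrix.diagonal_mul_diagonal, Matrix.diagonal_apply, Matrix.one_apply]
    split_ifs with hxy
    · rw [← Complex.exp_add, add_neg_cancel, Complex.exp_zero]
    · rfl
  · apply conj_fix
    intro x y hxy
    by_cases hc : y.1 = x.2 ∧ y.2 = x.1
    · exact ⟨by rw [hc.1], by rw [hc.2]⟩
    · exact absurd (P2_supp N x y hc) hxy
  · exact conj_fix N h _ (JJP_supp N)
end
end
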